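/- arXiv:1211.6044 — 6 statements merged into one kernel-verified Lean document; each statement's English description precedes it below -/
import Mathlib

section
/- (Hermite's criterion) A polynomial f in F_q[x], where q = p^r for p prime, is a permutation polynomial of F_q if and only if (1) the reduction of f(x)^{q-1} mod (x^q - x) has degree q-1 with leading coefficient 1, and (2) for each integer t with 1 ≤ t ≤ q-2 and t not divisible by p, the reduction of f(x)^t mod (x^q - x) has degree at most q-2. -/
/-!
Write `q = |F|`. Reducing modulo `X ^ q - X` does not change a polynomial as a function on `F` and
leaves a polynomial of degree `< q`; since `∑ c, c ^ i` vanishes for `i < q - 1` and equals `-1`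
for `i = q - 1`, the coefficient of `X ^ (q - 1)` in `f ^ t %ₘ (X ^ q - X)` is `-∑ c, f(c) ^ t`.
The two conditions therefore say that the power sums `∑ c, f(c) ^ t`, `1 ≤ t ≤ q - 1`, are those
of the identity, the exponents divisible by `p` being recovered through Frobenius. Conversely,
these power sums force `∑ c, (f(c) - b) ^ (q - 1) = -1`, which fails if `b` is not a value of `f`,
since then every summand is `1`.
-/

open Polynomial Finset

namespace Polynomial

variable {R : Type*} [Semiring R]

theorem monic_and_natDegree_eq_iff_coeff_eq_one [Nontrivial R] {P : R[X]} {n : ℕ}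
    (hP : P.natDegree ≤ n) : P.Monic ∧ P.natDegree = n ↔ P.coeff n = 1 := by
  constructor
  · rintro ⟨hm, rfl⟩
    exact hm
  · intro h
    have hn : P.natDegree = n := le_antisymm hP (le_natDegree_of_ne_zero (h ▸ one_ne_zero))
    exact ⟨by rw [Monic, leadingCoeff, hn, h], hn⟩

theorem natDegree_le_pred_iff_coeff_eq_zero {P : R[X]} {n : ℕ} (hn : 0 < n)
    (hP : P.natDegree ≤ n) : P.natDegree ≤ n - 1 ↔ P.coeff n = 0 := by
  refine ⟨fun h => coeff_eq_zero_of_natDegree_lt (by omega), fun h => ?_⟩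
  by_contra! hlt
  have hdeg : P.natDegree = n := by omega
  exact leadingCoeff_ne_zero.mpr (ne_zero_of_natDegree_gt (p := P) (n := 0) (by omega))
    (by rwa [leadingCoeff, hdeg])

end Polynomial

section PowerSums

variable {R : Type*} [CommSemiring R] {α : Type*} [Fintype α]

theorem sum_eval_comp_eq_sum_coeff_mul_sum_pow (g : α → R) {P : R[X]} {n : ℕ}
    (hP : P.natDegree < n) :
    ∑ c, P.eval (g c) = ∑ i ∈ range n, P.coeff i * ∑ c, g c ^ i := by
  simp_rw [eval_eq_sum_range' hP, mul_sum]
  exact sum_comm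

theorem sum_pow_eq_zero_of_forall_not_dvd (p : ℕ) [Fact p.Prime] [CharP R p] (g : α → R)
    {N : ℕ} (h : ∀ t, 0 < t → t ≤ N → ¬ p ∣ t → ∑ c, g c ^ t = 0) :
    ∀ t, 0 < t → t ≤ N → ∑ c, g c ^ t = 0 := by
  intro t
  induction t using Nat.strong_induction_on with
  | _ t ih =>
    intro ht htN
    by_cases hpt : p ∣ t
    · obtain ⟨s, rfl⟩ := hpt
      have hp : 1 < p := (Fact.out : p.Prime).one_lt
      have hs : 0 < s := Nat.pos_of_mul_pos_left ht
      have hst : s < p * s := lt_mul_left hs hp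
      calc ∑ c, g c ^ (p * s) = (∑ c, g c ^ s) ^ p := by
            simp_rw [sum_pow_char, ← pow_mul, mul_comm]
        _ = 0 := by rw [ih s hst hs (hst.le.trans htN), zero_pow (by omega)]
    · exact h t ht htN hpt

end PowerSums

namespace FiniteField

variable {F : Type*} [Field F] [Fintype F]

theorem sum_pow_card_sub_one : ∑ x : F, x ^ (Fintype.card F - 1) = -1 := by
  classical
  have hq : 1 < Fintype.card F := Fintype.one_lt_card
  rw [← sum_erase_add _ _ (mem_univ 0), zero_pow (by omega), add_zero,
    sum_congr rfl fun x hx => pow_card_sub_one_eq_one x (ne_of_mem_erase hx), sum_const,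
    card_erase_of_mem (mem_univ 0), card_univ, nsmul_one, Nat.cast_pred (by omega),
    cast_card_eq_zero, zero_sub]

theorem sum_eval_eq_neg_coeff {P : F[X]} (hP : P.natDegree < Fintype.card F) :
    ∑ c : F, P.eval c = -P.coeff (Fintype.card F - 1) := by
  have hq : 1 < Fintype.card F := Fintype.one_lt_card
  rw [sum_eval_comp_eq_sum_coeff_mul_sum_pow (fun c => c) hP,
    sum_eq_single_of_mem (Fintype.card F - 1) (mem_range.mpr (by omega)) fun i hi hne => ?_]
  · simp [sum_pow_card_sub_one]
  · rw [sum_pow_lt_card_sub_one F i (by grind), mul_zero]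

theorem surjective_of_sum_pow {α : Type*} [Fintype α] (g : α → F)
    (h : ∀ t < Fintype.card F - 1, ∑ c, g c ^ t = 0)
    (h' : ∑ c, g c ^ (Fintype.card F - 1) = -1) : Function.Surjective g := by
  intro b
  by_contra! hb
  have hq : 1 < Fintype.card F := Fintype.one_lt_card
  set P : F[X] := (X - C b) ^ (Fintype.card F - 1)
  have hPdeg : P.natDegree = Fintype.card F - 1 := by simp [P]
  have hPcoeff : P.coeff (Fintype.card F - 1) = 1 := by
    rw [← hPdeg]; exact ((monic_X_sub_C b).pow _).coeff_natDegree
  have hsum : ∑ c, P.eval (g c) = -1 := by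
    rw [sum_eval_comp_eq_sum_coeff_mul_sum_pow g (n := Fintype.card F) (by omega),
      sum_eq_single_of_mem (Fintype.card F - 1) (mem_range.mpr (by omega)) fun i hi hne => by
        rw [h i (by grind), mul_zero], hPcoeff, h', one_mul]
  have hzero : ∑ c, P.eval (g c) = 0 := by
    simp only [P, eval_pow, eval_sub, eval_X, eval_C]
    rw [sum_congr rfl fun c _ => pow_card_sub_one_eq_one _ (sub_ne_zero.mpr (hb c))]
    simpa using h 0 (by omega)
  exact neg_ne_zero.mpr one_ne_zero (hsum ▸ hzero)

theorem bijective_iff_sum_pow (g : F → F) :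
    Function.Bijective g ↔ ∑ c, g c ^ (Fintype.card F - 1) = -1 ∧
      ∀ t, 1 ≤ t → t ≤ Fintype.card F - 2 → ¬ ringChar F ∣ t → ∑ c, g c ^ t = 0 := by
  constructor
  · intro hg
    have hsum t : ∑ c, g c ^ t = ∑ c, c ^ t := Fintype.sum_bijective g hg _ _ fun _ => rfl
    exact ⟨(hsum _).trans sum_pow_card_sub_one,
      fun t _ ht _ => (hsum t).trans (sum_pow_lt_card_sub_one F t (by omega))⟩
  · rintro ⟨htop, hlow⟩
    have := Fact.mk (CharP.char_is_prime F (ringChar F))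
    have hpos := sum_pow_eq_zero_of_forall_not_dvd (ringChar F) g hlow
    refine (Fintype.bijective_iff_surjective_and_card g).mpr
      ⟨surjective_of_sum_pow g (fun t ht => ?_) htop, rfl⟩
    rcases t.eq_zero_or_pos with rfl | ht0
    · simp
    · exact hpos t ht0 (by omega)

theorem monic_X_pow_card_sub_X : (X ^ Fintype.card F - X : F[X]).Monic :=
  monic_X_pow_sub (by rw [degree_X]; exact_mod_cast Fintype.one_lt_card)

theorem natDegree_modByMonic_X_pow_card_sub_X_lt (P : F[X]) :
    (P %ₘ (X ^ Fintype.card F - X)).natDegree < Fintype.card F := by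
  have hdeg := X_pow_card_sub_X_natDegree_eq F (Fintype.one_lt_card (α := F))
  have hne : (X ^ Fintype.card F - X : F[X]) ≠ 1 := fun h1 => by
    rw [h1, natDegree_one] at hdeg
    exact Fintype.card_ne_zero hdeg.symm
  simpa only [hdeg] using natDegree_modByMonic_lt P (monic_X_pow_card_sub_X (F := F)) hne

theorem eval_modByMonic_X_pow_card_sub_X (P : F[X]) (c : F) :
    (P %ₘ (X ^ Fintype.card F - X)).eval c = P.eval c := by
  simp [modByMonic_eq_sub_mul_div, pow_card]

theorem sum_eval_eq_neg_coeff_modByMonic (P : F[X]) :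
    ∑ c : F, P.eval c = -(P %ₘ (X ^ Fintype.card F - X)).coeff (Fintype.card F - 1) := by
  simp_rw [← sum_eval_eq_neg_coeff (natDegree_modByMonic_X_pow_card_sub_X_lt P),
    eval_modByMonic_X_pow_card_sub_X]

end FiniteField

theorem hermite_criterion {F : Type*} [Field F] [Fintype F]
    (f : F[X]) :
    Function.Bijective (fun c : F => f.eval c) ↔
      (((f ^ (Fintype.card F - 1)) %ₘ (X ^ Fintype.card F - X)).Monic ∧
        ((f ^ (Fintype.card F - 1)) %ₘ (X ^ Fintype.card F - X)).natDegree =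
          Fintype.card F - 1) ∧
      (∀ t : ℕ, 1 ≤ t → t ≤ Fintype.card F - 2 → ¬ (ringChar F ∣ t) →
        ((f ^ t) %ₘ (X ^ Fintype.card F - X)).natDegree ≤ Fintype.card F - 2) := by
  have hq : 1 < Fintype.card F := Fintype.one_lt_card
  have hdeg t : ((f ^ t) %ₘ (X ^ Fintype.card F - X)).natDegree ≤ Fintype.card F - 1 :=
    Nat.le_pred_of_lt (FiniteField.natDegree_modByMonic_X_pow_card_sub_X_lt _)
  have hsum t : ∑ c, f.eval c ^ t =
      -((f ^ t) %ₘ (X ^ Fintype.card F - X)).coeff (Fintype.card F - 1) := by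
    simpa using FiniteField.sum_eval_eq_neg_coeff_modByMonic (f ^ t)
  rw [FiniteField.bijective_iff_sum_pow, monic_and_natDegree_eq_iff_coeff_eq_one (hdeg _),
    hsum, neg_inj]
  refine and_congr_right fun _ => forall_congr' fun t => imp_congr_right fun _ =>
    imp_congr_right fun _ => imp_congr_right fun _ => ?_
  rw [hsum, neg_eq_zero, ← natDegree_le_pred_iff_coeff_eq_zero (by omega) (hdeg t)]
  rfl
end

section
/- A polynomial f ∈ F_q[x], where q = p^r, is a permutation polynomial of every finite extension of F_q if and only if f(x) = a x^{p^h} + b for some a ≠ 0, b ∈ F_q, and nonnegative integer h. -/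
/-!
If `f` is injective on a finite extension `E` in which `f - f(t)` splits, then `t` is the only
root of `f - f(t)` in `E`, so `f - f(t) = a (X - t)ⁿ`. Doing this for `t = 0` and `t = 1` gives
`f = a Xⁿ + b` and `(X - 1)ⁿ = Xⁿ - 1`. Writing `n = pᵏ m` with `p ∤ m`, injectivity of Frobenius
reduces the latter to `(X - 1)ᵐ = Xᵐ - 1`, whose derivative at `1` forces `m = 1`.
Conversely `c ↦ a c^(pᵏ) + b` is a composite of bijections of any finite field of
characteristic `p`.
-/

open Polynomial

theorem natDegree_ne_zero_of_injective_eval {R : Type*} [CommRing R] [Nontrivial R] {g : R[X]}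
    (hg : Function.Injective fun c => g.eval c) : g.natDegree ≠ 0 := by
  intro h
  rw [eq_C_of_natDegree_eq_zero h] at hg
  exact zero_ne_one (hg (by simp))

theorem sub_C_eval_eq_C_mul_X_sub_C_pow_of_injective {R : Type*} [CommRing R] [IsDomain R]
    {g : R[X]} (hg : Function.Injective fun c => g.eval c) (t : R)
    (hs : (g - C (g.eval t)).Splits) :
    g - C (g.eval t) = C g.leadingCoeff * (X - C t) ^ g.natDegree := by
  have hdeg := natDegree_ne_zero_of_injective_eval hg
  have hne : g - C (g.eval t) ≠ 0 := fun h0 =>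
    hdeg (by rw [← natDegree_sub_C (a := g.eval t), h0, natDegree_zero])
  have hroots : (g - C (g.eval t)).roots = Multiset.replicate g.natDegree t := by
    refine Multiset.eq_replicate.2
      ⟨by rw [← hs.natDegree_eq_card_roots, natDegree_sub_C], fun r hr => hg ?_⟩
    simpa [sub_eq_zero] using (mem_roots hne).1 hr
  have hlc : (g - C (g.eval t)).leadingCoeff = g.leadingCoeff := by
    rw [leadingCoeff, natDegree_sub_C, coeff_sub, coeff_C, if_neg hdeg, sub_zero, leadingCoeff]
  conv_lhs => rw [hs.eq_prod_roots, hroots, hlc]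
  rw [Multiset.map_replicate, Multiset.prod_replicate]

/-- The extension is shrunk to `Type` because permutation polynomials are tested only on extensions
living there. -/
theorem exists_fintype_algebra_splits {F : Type*} [Field F] [Finite F] (g : F[X]) :
    ∃ (E : Type) (_ : Field E) (_ : Fintype E) (_ : Algebra F E),
      (g.map (algebraMap F E)).Splits := by
  have : Finite (SplittingField g) := Module.finite_of_finite F
  have : Small.{0} (SplittingField g) := Countable.toSmall _
  exact ⟨Shrink.{0} (SplittingField g), inferInstance, Fintype.ofFinite _, inferInstance,
    (SplittingField.splits g).of_algHom (Shrink.algEquiv F _).symm.toAlgHom⟩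

section InjectiveOnExtensions

variable {F : Type*} [Field F] [Finite F] {f : F[X]}
  (H : ∀ (E : Type) [Field E] [Fintype E] [Algebra F E],
    Function.Injective fun c : E => (f.map (algebraMap F E)).eval c)
include H

theorem natDegree_ne_zero_of_injective_on_extensions : f.natDegree ≠ 0 := by
  obtain ⟨E, _, _, _, -⟩ := exists_fintype_algebra_splits f
  simpa only [natDegree_map] using natDegree_ne_zero_of_injective_eval (H E)

theorem sub_C_eval_eq_C_mul_X_sub_C_pow_of_injective_on_extensions (t : F) :
    f - C (f.eval t) = C f.leadingCoeff * (X - C t) ^ f.natDegree := by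
  obtain ⟨E, _, _, _, hs⟩ := exists_fintype_algebra_splits (f - C (f.eval t))
  have key := sub_C_eval_eq_C_mul_X_sub_C_pow_of_injective (H E) (algebraMap F E t)
    (by simpa only [Polynomial.map_sub, map_C, eval_map_apply] using hs)
  apply map_injective (algebraMap F E) (algebraMap F E).injective
  simpa only [eval_map_apply, leadingCoeff_map, natDegree_map, Polynomial.map_sub,
    Polynomial.map_mul, Polynomial.map_pow, map_C, map_X] using key

end InjectiveOnExtensions

theorem X_sub_one_pow_ne_X_pow_sub_one {R : Type*} [CommRing R] {m : ℕ} (hm : 2 ≤ m)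
    (hmR : (m : R) ≠ 0) : ((X : R[X]) - 1) ^ m ≠ X ^ m - 1 := by
  intro h
  have hd := congrArg (fun q => (derivative q).eval 1) h
  rw [← C_1] at hd
  simp only [derivative_X_sub_C_pow, derivative_sub, derivative_X_pow, derivative_C, eval_mul,
    eval_pow, eval_sub, eval_X, eval_C, sub_self, zero_pow (show m - 1 ≠ 0 by omega), mul_zero,
    one_pow, mul_one, sub_zero] at hd
  exact hmR hd.symm

theorem exists_eq_pow_of_X_sub_one_pow_eq {R : Type*} [CommRing R] [IsDomain R] (p : ℕ)
    [Fact p.Prime] [CharP R p] {n : ℕ} (hn : n ≠ 0) (h : ((X : R[X]) - 1) ^ n = X ^ n - 1) :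
    ∃ k, n = p ^ k := by
  obtain ⟨k, m, hpm, rfl⟩ := Nat.exists_eq_pow_mul_and_not_dvd hn p (Fact.out : p.Prime).ne_one
  refine ⟨k, ?_⟩
  have hm : ((X : R[X]) - 1) ^ m = X ^ m - 1 := by
    apply iterateFrobenius_inj R[X] p k
    simp only [iterateFrobenius_def, ← pow_mul, sub_pow_char_pow, one_pow]
    rw [mul_comm, h]
  suffices m = 1 by rw [this, mul_one]
  by_contra hm1
  have hm0 : m ≠ 0 := by rintro rfl; simp at hpm
  refine X_sub_one_pow_ne_X_pow_sub_one (R := R) (by omega) ?_ hm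
  rwa [Ne, CharP.cast_eq_zero_iff R p]

theorem bijective_mul_pow_expChar_pow_add {K : Type*} [Field K] [Finite K] (p : ℕ) [ExpChar K p]
    (k : ℕ) {a : K} (ha : a ≠ 0) (b : K) : Function.Bijective fun c : K => a * c ^ p ^ k + b :=
  (Equiv.addRight b).bijective.comp
    ((mulLeft_bijective₀ a ha).comp (bijective_iterateFrobenius K p k))

theorem pp_of_all_extensions_iff {F : Type*} [Field F] [Fintype F] (f : F[X]) :
    (∀ (E : Type) [Field E] [Fintype E] [Algebra F E],
        Function.Bijective (fun c : E => (f.map (algebraMap F E)).eval c)) ↔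
      ∃ (a b : F) (h : ℕ), a ≠ 0 ∧ f = C a * X ^ (ringChar F ^ h) + C b := by
  have : Fact (ringChar F).Prime := ⟨CharP.char_is_prime F _⟩
  constructor
  · intro H
    have Hinj := fun E [Field E] [Fintype E] [Algebra F E] => (H E).injective
    have hn := natDegree_ne_zero_of_injective_on_extensions Hinj
    have ha : f.leadingCoeff ≠ 0 :=
      leadingCoeff_ne_zero.2 (ne_zero_of_natDegree_gt (Nat.pos_of_ne_zero hn))
    have h₀ := sub_C_eval_eq_C_mul_X_sub_C_pow_of_injective_on_extensions Hinj 0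
    have h₁ := sub_C_eval_eq_C_mul_X_sub_C_pow_of_injective_on_extensions Hinj 1
    rw [C_0, sub_zero] at h₀
    have hab : f.eval 1 - f.eval 0 = f.leadingCoeff := by
      simpa [hn] using congrArg (eval 1) h₀
    have hkey : ((X : F[X]) - 1) ^ f.natDegree = X ^ f.natDegree - 1 := by
      apply mul_left_cancel₀ (C_ne_zero.2 ha)
      rw [C_1] at h₁
      rw [← h₁, mul_sub, ← h₀, ← hab, C_sub, mul_one]
      ring
    obtain ⟨k, hk⟩ := exists_eq_pow_of_X_sub_one_pow_eq (ringChar F) hn hkey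
    exact ⟨f.leadingCoeff, f.eval 0, k, ha, by rw [← hk, ← h₀, sub_add_cancel]⟩
  · rintro ⟨a, b, k, ha, rfl⟩ E _ _ _
    have : CharP E (ringChar F) := charP_of_injective_algebraMap' F (ringChar F)
    simpa using bijective_mul_pow_expChar_pow_add (ringChar F) k
      ((map_ne_zero (algebraMap F E)).2 ha) (algebraMap F E b)
end

section
/- Let h be a positive integer with gcd(h, q-1) = 1, let s be a positive divisor of q-1, and let g ∈ F_q[x] be such that g(x^s) has no nonzero root in F_q. Then f(x) = x^h (g(x^s))^{(q-1)/s} is a permutation polynomial of F_q. -/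
open Polynomial

/-- The nonzero part of `G` is the unit group, of order `|G| - 1`. -/
theorem pow_left_injective_of_coprime_card_sub_one {G : Type*} [GroupWithZero G] [Finite G]
    {n : ℕ} (hn : n ≠ 0) (hcop : n.Coprime (Nat.card G - 1)) :
    Function.Injective fun x : G => x ^ n := by
  intro x y hxy
  obtain rfl | hx := eq_or_ne x 0
  · exact ((pow_eq_zero_iff hn).mp (hxy.symm.trans (zero_pow hn))).symm
  obtain rfl | hy := eq_or_ne y 0
  · exact (pow_eq_zero_iff hn).mp (hxy.trans (zero_pow hn))
  have hunits : (Nat.card Gˣ).Coprime n := by rwa [Nat.card_units, Nat.coprime_comm]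
  have := hunits.pow_left_bijective.injective (a₁ := Units.mk0 x hx) (a₂ := Units.mk0 y hy)
    (Units.ext <| by simpa using hxy)
  simpa using congrArg Units.val this

namespace FiniteField

variable {F : Type*} [Field F] [Fintype F]

theorem mul_pow_card_sub_one_div_pow {s : ℕ} (hdvd : s ∣ Fintype.card F - 1) (h : ℕ) (c : F)
    {a : F} (ha : a ≠ 0) :
    (c ^ h * a ^ ((Fintype.card F - 1) / s)) ^ s = (c ^ s) ^ h := by
  rw [mul_pow, ← pow_mul a, Nat.div_mul_cancel hdvd, pow_card_sub_one_eq_one a ha, mul_one,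
    ← pow_mul, ← pow_mul, mul_comm]

/-- Raising to the `s`-th power kills the factor `φ (c ^ s) ^ ((q - 1) / s)`, so the map
`c ↦ c ^ h` can be recovered first on `s`-th powers and then on all of `F`. -/
theorem injective_pow_mul_comp_pow_pow {h s : ℕ} (hh : h ≠ 0)
    (hcop : h.Coprime (Fintype.card F - 1)) (hdvd : s ∣ Fintype.card F - 1) {φ : F → F}
    (hφ : ∀ c ≠ 0, φ (c ^ s) ≠ 0) :
    Function.Injective fun c : F => c ^ h * φ (c ^ s) ^ ((Fintype.card F - 1) / s) := by
  set f : F → F := fun c => c ^ h * φ (c ^ s) ^ ((Fintype.card F - 1) / s)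
  have pow_inj : Function.Injective fun x : F => x ^ h :=
    pow_left_injective_of_coprime_card_sub_one hh (Nat.card_eq_fintype_card (α := F) ▸ hcop)
  have f_eq_zero {c : F} : f c = 0 ↔ c = 0 := by
    constructor
    · intro hc
      by_contra hc0
      exact mul_ne_zero (pow_ne_zero _ hc0) (pow_ne_zero _ (hφ c hc0)) hc
    · rintro rfl
      simp [f, zero_pow hh]
  intro a b hab
  obtain rfl | ha := eq_or_ne a 0
  · exact (f_eq_zero.mp (hab.symm.trans (f_eq_zero.mpr rfl))).symm
  obtain rfl | hb := eq_or_ne b 0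
  · exact f_eq_zero.mp (hab.trans (f_eq_zero.mpr rfl))
  have hpow : a ^ s = b ^ s := pow_inj <| show (a ^ s) ^ h = (b ^ s) ^ h by
    rw [← mul_pow_card_sub_one_div_pow hdvd h a (hφ a ha),
      ← mul_pow_card_sub_one_div_pow hdvd h b (hφ b hb)]
    exact congrArg (fun x : F => x ^ s) hab
  refine pow_inj (mul_right_cancel₀ (pow_ne_zero ((Fintype.card F - 1) / s) (hφ a ha)) ?_)
  simpa only [f, hpow] using hab

end FiniteField

theorem pp_of_specific_form_general {F : Type*} [Field F] [Fintype F]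
    (h s : ℕ) (hh : 0 < h) (hgcd : Nat.gcd h (Fintype.card F - 1) = 1)
    (hdvd : s ∣ Fintype.card F - 1)
    (g : F[X]) (hg : ∀ c : F, c ≠ 0 → g.eval (c ^ s) ≠ 0) :
    Function.Bijective
      (fun c : F =>
        ((X ^ h * (g.comp (X ^ s)) ^ ((Fintype.card F - 1) / s) : F[X])).eval c) := by
  refine Finite.injective_iff_bijective.mp ?_
  simpa only [eval_mul, eval_pow, eval_comp, eval_X] using
    FiniteField.injective_pow_mul_comp_pow_pow hh.ne' hgcd hdvd (φ := g.eval) hg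

theorem pp_of_specific_form {F : Type*} [Field F] [Fintype F]
    (h s : ℕ) (hh : 0 < h) (hgcd : Nat.gcd h (Fintype.card F - 1) = 1)
    (hs : 0 < s) (hdvd : s ∣ Fintype.card F - 1)
    (g : F[X]) (hg : ∀ c : F, c ≠ 0 → g.eval (c ^ s) ≠ 0) :
    Function.Bijective
      (fun c : F =>
        ((X ^ h * (g.comp (X ^ s)) ^ ((Fintype.card F - 1) / s) : F[X])).eval c) :=
  pp_of_specific_form_general h s hh hgcd hdvd g hg
end

section
/- If q is odd, then the polynomial x^{(q+1)/2} + a x ∈ F_q[x] is a permutation polynomial of F_q if and only if a^2 - 1 is a nonzero square in F_q. -/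
/-!
Writing `χ` for the quadratic character, `c ^ ((q + 1) / 2) = χ(c) c`, so the binomial multiplies
nonzero squares by `a + 1` and nonsquares by `a - 1`. If `χ(a + 1) = χ(a - 1) ≠ 0`, which is exactly
the condition that `a ^ 2 - 1` be a nonzero square, the map scales `χ` by the constant `χ(a + 1)`,
hence preserves the square classes and is injective on each of them. Conversely, if `a + 1 = 0` then
`1 ↦ 0`; if `a - 1 = 0` then every nonsquare maps to `0`; and if `t = (a + 1) / (a - 1)` is a
nonsquare then `t` and `1` have the same image.
-/

namespace FiniteField

variable {F : Type*} [Field F] [Fintype F]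

theorem ringChar_ne_two_of_odd_card (hq : Odd (Fintype.card F)) : ringChar F ≠ 2 := fun h =>
  Nat.not_even_iff_odd.mpr hq (Nat.even_iff.mpr (even_card_iff_char_two.mp h))

variable [DecidableEq F]

/-- The binomial `c ^ ((q + 1) / 2) + a c`, written as `(χ(c) + a) c`. -/
def quadBinomial (a c : F) : F :=
  ((quadraticChar F c : F) + a) * c

theorem pow_card_add_one_div_two_add_mul_eq_quadBinomial (hq : Odd (Fintype.card F)) (a c : F) :
    c ^ ((Fintype.card F + 1) / 2) + a * c = quadBinomial a c := by
  have hexp : (Fintype.card F + 1) / 2 = Fintype.card F / 2 + 1 := by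
    obtain ⟨k, hk⟩ := hq
    omega
  rw [quadBinomial, quadraticChar_eq_pow_of_char_ne_two' (ringChar_ne_two_of_odd_card hq), hexp,
    pow_succ]
  ring

@[simp]
theorem quadBinomial_zero_right (a : F) : quadBinomial a 0 = 0 := by
  simp [quadBinomial]

theorem quadBinomial_of_isSquare {a c : F} (hc₀ : c ≠ 0) (hc : IsSquare c) :
    quadBinomial a c = (a + 1) * c := by
  rw [quadBinomial, (quadraticChar_one_iff_isSquare hc₀).mpr hc, Int.cast_one, add_comm]

theorem quadBinomial_of_not_isSquare {a c : F} (hc : ¬IsSquare c) :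
    quadBinomial a c = (a - 1) * c := by
  rw [quadBinomial, quadraticChar_neg_one_iff_not_isSquare.mpr hc, Int.cast_neg, Int.cast_one]
  ring

open Function

theorem add_one_ne_zero_of_injective_quadBinomial {a : F} (h : Injective (quadBinomial a)) :
    a + 1 ≠ 0 := by
  intro ha
  refine one_ne_zero (h ?_)
  rw [quadBinomial_of_isSquare one_ne_zero IsSquare.one, ha, zero_mul, quadBinomial_zero_right]

theorem sub_one_ne_zero_of_injective_quadBinomial (hF : ringChar F ≠ 2) {a : F}
    (h : Injective (quadBinomial a)) : a - 1 ≠ 0 := by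
  intro ha
  obtain ⟨u, hu⟩ := exists_nonsquare hF
  have hu₀ : u ≠ 0 := by
    rintro rfl
    exact hu IsSquare.zero
  refine hu₀ (h ?_)
  rw [quadBinomial_of_not_isSquare hu, ha, zero_mul, quadBinomial_zero_right]

theorem isSquare_sq_sub_one_of_injective_quadBinomial (hF : ringChar F ≠ 2) {a : F}
    (h : Injective (quadBinomial a)) : IsSquare (a ^ 2 - 1) := by
  have ha₁ := sub_one_ne_zero_of_injective_quadBinomial hF h
  set t := (a + 1) / (a - 1)
  have ht : IsSquare t := by
    by_contra ht
    have ht₁ : t ≠ 1 := by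
      rintro h₁
      exact ht (h₁ ▸ IsSquare.one)
    refine ht₁ (h ?_)
    rw [quadBinomial_of_not_isSquare ht, quadBinomial_of_isSquare one_ne_zero IsSquare.one,
      mul_one, mul_div_cancel₀ _ ha₁]
  have hfac : a ^ 2 - 1 = t * (a - 1) ^ 2 := by
    simp only [t]
    field_simp
    ring
  rw [hfac]
  exact ht.mul (IsSquare.sq _)

theorem quadraticChar_quadBinomial {a : F}
    (h : quadraticChar F (a + 1) = quadraticChar F (a - 1)) (c : F) :
    quadraticChar F (quadBinomial a c) = quadraticChar F (a + 1) * quadraticChar F c := by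
  by_cases hc₀ : c = 0
  · simp [hc₀]
  by_cases hc : IsSquare c
  · rw [quadBinomial_of_isSquare hc₀ hc, map_mul]
  · rw [quadBinomial_of_not_isSquare hc, map_mul, h]

theorem injective_quadBinomial {a : F} (h₀ : a ^ 2 - 1 ≠ 0) (hsq : IsSquare (a ^ 2 - 1)) :
    Injective (quadBinomial a) := by
  have hfac : a ^ 2 - 1 = (a + 1) * (a - 1) := by ring
  have hχ : quadraticChar F (a + 1) * quadraticChar F (a - 1) = 1 := by
    rw [← map_mul, ← hfac, quadraticChar_one_iff_isSquare h₀]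
    exact hsq
  obtain ⟨hε, hεε⟩ : quadraticChar F (a + 1) = quadraticChar F (a - 1) ∧
      quadraticChar F (a + 1) * quadraticChar F (a + 1) = 1 := by
    rcases Int.eq_one_or_neg_one_of_mul_eq_one' hχ with ⟨hp, hm⟩ | ⟨hp, hm⟩ <;> simp [hp, hm]
  intro x y hxy
  have hχxy : quadraticChar F x = quadraticChar F y := by
    simpa only [quadraticChar_quadBinomial hε, ← mul_assoc, hεε, one_mul] using
      congrArg (quadraticChar F (a + 1) * quadraticChar F ·) hxy
  by_cases hx₀ : x = 0
  · rw [hx₀, quadraticChar_zero, eq_comm, quadraticChar_eq_zero_iff] at hχxy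
    rw [hx₀, hχxy]
  have hscale : (quadraticChar F x : F) + a ≠ 0 := by
    obtain ⟨ha₁, ha₂⟩ := mul_ne_zero_iff.mp (hfac ▸ h₀)
    rcases quadraticChar_dichotomy hx₀ with h | h
    · simpa [h, add_comm] using ha₁
    · simpa [h, neg_add_eq_sub] using ha₂
  exact mul_left_cancel₀ hscale (by simpa only [quadBinomial, hχxy] using hxy)

theorem bijective_quadBinomial_iff (hF : ringChar F ≠ 2) (a : F) :
    Bijective (quadBinomial a) ↔ a ^ 2 - 1 ≠ 0 ∧ IsSquare (a ^ 2 - 1) := by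
  rw [← Finite.injective_iff_bijective]
  refine ⟨fun h => ⟨?_, isSquare_sq_sub_one_of_injective_quadBinomial hF h⟩,
    fun h => injective_quadBinomial h.1 h.2⟩
  rw [show a ^ 2 - 1 = (a + 1) * (a - 1) by ring]
  exact mul_ne_zero (add_one_ne_zero_of_injective_quadBinomial h)
    (sub_one_ne_zero_of_injective_quadBinomial hF h)

end FiniteField

theorem quadratic_binomial_pp_iff {F : Type*} [Field F] [Fintype F]
    (hq : Odd (Fintype.card F)) (a : F) :
    Function.Bijective (fun c : F => c ^ ((Fintype.card F + 1) / 2) + a * c) ↔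
      (a ^ 2 - 1 ≠ 0 ∧ IsSquare (a ^ 2 - 1)) := by
  classical
  rw [funext (FiniteField.pow_card_add_one_div_two_add_mul_eq_quadBinomial hq a)]
  exact FiniteField.bijective_quadBinomial_iff (FiniteField.ringChar_ne_two_of_odd_card hq) a
end

section
/- (Wan's bound) Let f ∈ F_q[x] have positive degree n. If f is not a permutation polynomial of F_q, then the size of the value set V_f = {f(c) : c ∈ F_q} satisfies |V_f| ≤ q - ⌈(q-1)/n⌉. -/
/-!
Let `P = ∏_{c ∈ F} (X - f(c))`; its coefficient of `X^(q-k)` is `±e_k`, the `k`-th elementary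
symmetric function of the values `f(c)`. For `0 < k` with `k n < q - 1`, `e_k` vanishes:
`l ↦ e_k(f(c l) : c ∈ F)` is a polynomial of degree `≤ k n` which is constant on `Fˣ`
(as `c ↦ c l` permutes `F`), hence constant, and at `l = 0` it equals `C(q, k) f(0)^k = 0`.
So `P - (X^q - X)` has degree `≤ q - ⌈(q-1)/n⌉`. Every value of `f` is a root of it, and it is
nonzero unless every element of `F` is a value of `f`.
-/

open Polynomial Finset

theorem Multiset.esymm_replicate {R : Type*} [CommSemiring R] (n k : ℕ) (a : R) :
    (Multiset.replicate n a).esymm k = n.choose k * a ^ k := by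
  have hrep : Multiset.replicate n a = (Finset.range n).val.map fun _ => a := by simp
  rw [hrep, Finset.esymm_map_val,
    Finset.sum_congr rfl fun S hS => by rw [Finset.prod_const, (Finset.mem_powersetCard.1 hS).2],
    Finset.sum_const, Finset.card_powersetCard, Finset.card_range, nsmul_eq_mul]

theorem Multiset.map_esymm {R S : Type*} [CommSemiring R] [CommSemiring S] (φ : R →+* S)
    (s : Multiset R) (k : ℕ) : φ (s.esymm k) = (s.map φ).esymm k := by
  simp [Multiset.esymm, map_multiset_sum, map_multiset_prod, Multiset.powersetCard_map,
    Multiset.map_map]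

theorem Polynomial.natDegree_esymm_le {R : Type*} [CommSemiring R] {s : Multiset R[X]} {n : ℕ}
    (hs : ∀ p ∈ s, p.natDegree ≤ n) (k : ℕ) : (s.esymm k).natDegree ≤ k * n := by
  refine (natDegree_multiset_sum_le _).trans (Multiset.max_le_of_forall_le _ _ ?_)
  simp only [Multiset.map_map, Multiset.mem_map, Multiset.mem_powersetCard]
  rintro _ ⟨t, ⟨hts, rfl⟩, rfl⟩
  calc t.prod.natDegree ≤ (t.map natDegree).sum := natDegree_multiset_prod_le t
    _ ≤ (t.map fun _ => n).sum :=
      Multiset.sum_map_le_sum_map _ _ fun p hp => hs p (Multiset.mem_of_le hts hp)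
    _ = t.card * n := by simp

theorem Nat.ceilDiv_sub_one_mul_lt {a b : ℕ} (ha : 0 < a) (hb : 0 < b) :
    (a ⌈/⌉ b - 1) * b < a := by
  by_contra! h
  have hle : a ⌈/⌉ b ≤ a ⌈/⌉ b - 1 := (ceilDiv_le_iff_le_mul hb).2 (by rwa [mul_comm])
  have hpos : a ⌈/⌉ b ≠ 0 := fun h0 => by
    have := (ceilDiv_le_iff_le_mul hb).1 h0.le
    omega
  omega

namespace FiniteField

variable {F : Type*} [Field F] [Fintype F]

theorem cast_choose_card_eq_zero {k : ℕ} (hk0 : k ≠ 0) (hk : k < Fintype.card F) :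
    ((Fintype.card F).choose k : F) = 0 := by
  obtain ⟨p, hp⟩ := CharP.exists F
  obtain ⟨m, hp, hq⟩ := FiniteField.card F p
  rw [CharP.cast_eq_zero_iff F p, hq]
  exact hp.dvd_choose_pow hk0 (hq ▸ hk).ne

theorem esymm_eval_univ_eq_zero (f : F[X]) {k : ℕ} (hk0 : k ≠ 0)
    (hkq : k < Fintype.card F) (hkn : k * f.natDegree < Fintype.card F - 1) :
    (univ.val.map fun c => f.eval c).esymm k = 0 := by
  classical
  set e := (univ.val.map fun c => f.eval c).esymm k
  set P : F[X] := (univ.val.map fun c => f.comp (C c * X)).esymm k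
  have hP : ∀ l, P.eval l = (univ.val.map fun c => f.eval (c * l)).esymm k := by
    intro l
    rw [← coe_evalRingHom, Multiset.map_esymm, Multiset.map_map]
    simp [Function.comp_def, eval_comp]
  have hP_deg : P.natDegree ≤ k * f.natDegree := by
    refine natDegree_esymm_le (fun p hp => ?_) k
    obtain ⟨c, -, rfl⟩ := Multiset.mem_map.1 hp
    have hlin : (C c * X).natDegree ≤ 1 := (natDegree_C_mul_le c X).trans natDegree_X_le
    exact natDegree_comp_le.trans (by simpa using Nat.mul_le_mul_left f.natDegree hlin)
  have hP_units : ∀ l ≠ 0, P.eval l = e := by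
    intro l hl
    have hperm : (univ.val.map fun c => f.eval (c * l)) = univ.val.map fun c => f.eval c := by
      conv_rhs => rw [← Multiset.map_univ_val_equiv (Equiv.mulRight₀ l hl), Multiset.map_map]
      rfl
    rw [hP, hperm]
  have hP_const : P = C e :=
    eq_of_natDegree_lt_card_of_eval_eq' P (C e) (univ.erase 0) (by simpa using hP_units)
      (by simp only [natDegree_C, zero_le, sup_of_le_left, mem_univ, card_erase_of_mem,
        card_univ]; omega)
  calc e = P.eval 0 := by rw [hP_const, eval_C]
    _ = (Fintype.card F).choose k * f.eval 0 ^ k := by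
      rw [hP]; simp [Multiset.esymm_replicate]
    _ = 0 := by rw [cast_choose_card_eq_zero hk0 hkq, zero_mul]

theorem coeff_prod_X_sub_C_eval (f : F[X]) {j : ℕ} (hj : j ≤ Fintype.card F) :
    (∏ c : F, (X - C (f.eval c))).coeff j =
      (-1) ^ (Fintype.card F - j) *
        (univ.val.map fun c => f.eval c).esymm (Fintype.card F - j) := by
  have hcard : Multiset.card (univ.val.map fun c => f.eval c) = Fintype.card F := by simp
  have hprod : ∏ c : F, (X - C (f.eval c)) =
      ((univ.val.map fun c => f.eval c).map fun v => X - C v).prod := by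
    rw [Multiset.map_map]; rfl
  rw [hprod, Multiset.prod_X_sub_C_coeff _ (hcard ▸ hj), hcard]

theorem natDegree_prod_X_sub_C_eval_sub_le (f : F[X]) {t : ℕ}
    (htq : t < Fintype.card F) (htn : (t - 1) * f.natDegree < Fintype.card F - 1) :
    (∏ c : F, (X - C (f.eval c)) - (X ^ Fintype.card F - X)).natDegree ≤
      Fintype.card F - t := by
  refine natDegree_le_iff_coeff_eq_zero.2 fun j (hj : Fintype.card F - t < j) => ?_
  rw [coeff_sub, coeff_sub, coeff_X_pow, coeff_X, if_neg (show 1 ≠ j by omega), sub_zero]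
  rcases lt_trichotomy j (Fintype.card F) with hjq | rfl | hqj
  · rw [coeff_prod_X_sub_C_eval f hjq.le, esymm_eval_univ_eq_zero f (by omega) (by omega),
      if_neg hjq.ne, mul_zero, sub_zero]
    exact (Nat.mul_le_mul_right _ (by omega)).trans_lt htn
  · simp [coeff_prod_X_sub_C_eval f le_rfl, Multiset.esymm]
  · rw [coeff_eq_zero_of_natDegree_lt, if_neg hqj.ne', sub_zero]
    simpa [natDegree_prod_of_monic, monic_X_sub_C] using hqj

theorem surjective_eval_of_prod_X_sub_C_eval_eq (f : F[X])
    (h : ∏ c : F, (X - C (f.eval c)) = X ^ Fintype.card F - X) :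
    Function.Surjective fun c => f.eval c := by
  intro a
  have ha : (∏ c : F, (X - C (f.eval c))).eval a = 0 := by simp [h, pow_card]
  obtain ⟨c, -, hc⟩ := prod_eq_zero_iff.1 ((eval_prod _ _ _).symm.trans ha)
  exact ⟨c, (sub_eq_zero.1 (by simpa using hc)).symm⟩

theorem card_image_eval_le_natDegree [DecidableEq F] (f : F[X])
    (h : ∏ c : F, (X - C (f.eval c)) ≠ X ^ Fintype.card F - X) :
    (univ.image fun c => f.eval c).card ≤
      (∏ c : F, (X - C (f.eval c)) - (X ^ Fintype.card F - X)).natDegree := by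
  refine card_le_degree_of_subset_roots fun v hv => ?_
  obtain ⟨c, -, rfl⟩ := mem_image.1 hv
  rw [mem_roots (sub_ne_zero.2 h), IsRoot, eval_sub, eval_prod,
    prod_eq_zero (mem_univ c) (by simp)]
  simp [pow_card]

end FiniteField

open FiniteField in
theorem wan_value_set_bound {F : Type*} [Field F] [Fintype F] [DecidableEq F]
    (f : F[X]) (n : ℕ) (hn : 0 < n) (hdeg : f.natDegree = n)
    (hf : ¬ Function.Bijective (fun c : F => f.eval c)) :
    (Finset.univ.image fun c : F => f.eval c).card ≤
      Fintype.card F - (Fintype.card F - 1) ⌈/⌉ n := by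
  set q := Fintype.card F
  have hq : 1 < q := Fintype.one_lt_card
  have hprod : ∏ c : F, (X - C (f.eval c)) ≠ X ^ q - X := fun h =>
    hf (Finite.surjective_iff_bijective.1 (surjective_eval_of_prod_X_sub_C_eval_eq f h))
  have ht_lt : (q - 1) ⌈/⌉ n < q :=
    ((ceilDiv_le_iff_le_mul hn).2 (Nat.le_mul_of_pos_left _ hn)).trans_lt (by omega)
  have ht_mul : ((q - 1) ⌈/⌉ n - 1) * f.natDegree < q - 1 := by
    rw [hdeg]; exact Nat.ceilDiv_sub_one_mul_lt (by omega) hn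
  exact (card_image_eval_le_natDegree f hprod).trans
    (natDegree_prod_X_sub_C_eval_sub_le f ht_lt ht_mul)
end

section
/- Mullen's conjecture is false: the polynomial f(x) = x^6 + a x^5 - a^4 x^2 over F_27, for any nonzero a ∈ F_27, is a permutation polynomial of F_27, even though n = 6 is even, q = 27 is odd, and 27 > 6·(6-2) = 24; in particular |V_f| = 27 > 22 = q - ⌈(q-1)/n⌉. -/
open Polynomial Finset

instance : Fact (Nat.Prime 3) := ⟨by norm_num⟩

noncomputable instance : Fintype (GaloisField 3 3) := Fintype.ofFinite _

noncomputable instance : DecidableEq (GaloisField 3 3) := Classical.decEq _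

/-!
Substituting `x = a y` gives `f(a y) = a⁶ (y⁶ + y⁵ - y²)`, so it suffices to show that
`g(y) = y⁶ + y⁵ - y²` permutes `𝔽₂₇`. By uniqueness of finite fields this can be checked in any
field with 27 elements; we decide it in an explicit model of `𝔽₃[t]/(t³ - t - 1)`.
-/

open Function

/-- The element `c0 + c1 t + c2 t²` of `𝔽₃[t]/(t³ - t - 1)`. -/
@[ext]
structure F27 where
  c0 : ZMod 3
  c1 : ZMod 3
  c2 : ZMod 3

namespace F27

@[simps] instance : Zero F27 := ⟨⟨0, 0, 0⟩⟩
@[simps] instance : One F27 := ⟨⟨1, 0, 0⟩⟩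
@[simps] instance : Add F27 := ⟨fun x y => ⟨x.c0 + y.c0, x.c1 + y.c1, x.c2 + y.c2⟩⟩
@[simps] instance : Neg F27 := ⟨fun x => ⟨-x.c0, -x.c1, -x.c2⟩⟩

-- reduce the product with `t³ = t + 1` and `t⁴ = t² + t`
@[simps] instance : Mul F27 := ⟨fun x y =>
  ⟨x.c0 * y.c0 + (x.c1 * y.c2 + x.c2 * y.c1),
   x.c0 * y.c1 + x.c1 * y.c0 + (x.c1 * y.c2 + x.c2 * y.c1) + x.c2 * y.c2,
   x.c0 * y.c2 + x.c1 * y.c1 + x.c2 * y.c0 + x.c2 * y.c2⟩⟩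

instance : CommRing F27 where
  add_assoc _ _ _ := by ext <;> simp <;> ring
  zero_add _ := by ext <;> simp
  add_zero _ := by ext <;> simp
  add_comm _ _ := by ext <;> simp <;> ring
  neg_add_cancel _ := by ext <;> simp
  mul_assoc _ _ _ := by ext <;> simp <;> ring
  one_mul _ := by ext <;> simp
  mul_one _ := by ext <;> simp
  left_distrib _ _ _ := by ext <;> simp <;> ring
  right_distrib _ _ _ := by ext <;> simp <;> ring
  mul_comm _ _ := by ext <;> simp <;> ring
  zero_mul _ := by ext <;> simp
  mul_zero _ := by ext <;> simp
  nsmul := nsmulRec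
  zsmul := zsmulRec

instance : DecidableEq F27 := fun x y =>
  decidable_of_iff (x.c0 = y.c0 ∧ x.c1 = y.c1 ∧ x.c2 = y.c2) F27.ext_iff.symm

def equivProd : F27 ≃ ZMod 3 × ZMod 3 × ZMod 3 where
  toFun x := (x.c0, x.c1, x.c2)
  invFun x := ⟨x.1, x.2.1, x.2.2⟩

instance : Fintype F27 := Fintype.ofEquiv _ equivProd.symm

theorem card_eq : Fintype.card F27 = 27 := rfl

instance : Nontrivial F27 := ⟨0, 1, by decide⟩

instance : NoZeroDivisors F27 := ⟨fun {x y} => by revert x y; decide⟩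

instance : IsDomain F27 := NoZeroDivisors.to_isDomain _

noncomputable instance : Field F27 := Fintype.fieldOfDomain _

theorem bijective_pow_six_add_pow_five_sub_sq :
    Bijective fun y : F27 => y ^ 6 + y ^ 5 - y ^ 2 := by
  decide

end F27

theorem RingEquiv.bijective_pow_six_add_pow_five_sub_sq {R S : Type*} [Ring R] [Ring S]
    (e : R ≃+* S) (h : Bijective fun y : S => y ^ 6 + y ^ 5 - y ^ 2) :
    Bijective fun y : R => y ^ 6 + y ^ 5 - y ^ 2 := by
  have conj : (fun y : R => y ^ 6 + y ^ 5 - y ^ 2) =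
      e.symm ∘ (fun y : S => y ^ 6 + y ^ 5 - y ^ 2) ∘ e := by
    funext y
    simp
  rw [conj]
  exact e.symm.bijective.comp (h.comp e.bijective)

theorem FiniteField.bijective_pow_six_add_pow_five_sub_sq {K : Type*} [Field K] [Fintype K]
    (hK : Fintype.card K = 27) : Bijective fun y : K => y ^ 6 + y ^ 5 - y ^ 2 :=
  (ringEquivOfCardEq (hK.trans F27.card_eq.symm)).bijective_pow_six_add_pow_five_sub_sq
    F27.bijective_pow_six_add_pow_five_sub_sq

theorem eval_X_pow_six_add_C_mul_X_pow_five_sub {K : Type*} [Field K] {a : K} (ha : a ≠ 0)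
    (c : K) : (X ^ 6 + C a * X ^ 5 - C (a ^ 4) * X ^ 2 : K[X]).eval c =
      a ^ 6 * ((a⁻¹ * c) ^ 6 + (a⁻¹ * c) ^ 5 - (a⁻¹ * c) ^ 2) := by
  simp only [eval_sub, eval_add, eval_mul, eval_pow, eval_C, eval_X]
  field_simp

theorem FiniteField.bijective_eval_X_pow_six_add_C_mul_X_pow_five_sub {K : Type*} [Field K]
    [Fintype K] (hK : Fintype.card K = 27) {a : K} (ha : a ≠ 0) :
    Bijective fun c : K => (X ^ 6 + C a * X ^ 5 - C (a ^ 4) * X ^ 2 : K[X]).eval c := by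
  have scale : (fun c : K => (X ^ 6 + C a * X ^ 5 - C (a ^ 4) * X ^ 2 : K[X]).eval c) =
      (a ^ 6 * ·) ∘ (fun y : K => y ^ 6 + y ^ 5 - y ^ 2) ∘ (a⁻¹ * ·) :=
    funext (eval_X_pow_six_add_C_mul_X_pow_five_sub ha)
  rw [scale]
  exact ((Equiv.mulLeft₀ _ (pow_ne_zero 6 ha)).bijective.comp
    (bijective_pow_six_add_pow_five_sub_sq hK)).comp (Equiv.mulLeft₀ _ (inv_ne_zero ha)).bijective

theorem GaloisField.card_three_three : Fintype.card (GaloisField 3 3) = 27 := by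
  rw [← Nat.card_eq_fintype_card, GaloisField.card 3 3 three_ne_zero]
  norm_num

theorem mullen_conjecture_false (a : GaloisField 3 3) (ha : a ≠ 0) :
    Function.Bijective
      (fun c : GaloisField 3 3 =>
        ((X ^ 6 + C a * X ^ 5 - C (a ^ 4) * X ^ 2 : (GaloisField 3 3)[X])).eval c) ∧
    Even 6 ∧ Odd (Fintype.card (GaloisField 3 3)) ∧
    Fintype.card (GaloisField 3 3) = 27 ∧ 27 > 6 * (6 - 2) ∧
    (Finset.univ.image fun c : GaloisField 3 3 =>
        ((X ^ 6 + C a * X ^ 5 - C (a ^ 4) * X ^ 2 : (GaloisField 3 3)[X])).eval c).card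
      = 27 ∧ (27 : ℕ) > 27 - 26 ⌈/⌉ 6 := by
  have hcard := GaloisField.card_three_three
  have hbij := FiniteField.bijective_eval_X_pow_six_add_C_mul_X_pow_five_sub hcard ha
  refine ⟨hbij, by decide, by rw [hcard]; decide, hcard, by norm_num, ?_, by decide⟩
  rw [image_univ_of_surjective hbij.2, card_univ, hcard]
end
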